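/- arXiv:1902.08462 — 4 statements merged into one kernel-verified Lean document; each statement's English description precedes it below -/
import Mathlib

section
/- Let u : ℝ × ℝ → ℂ be a smooth, spatially periodic solution of κ u_tt + i u_t + β u_xx + f(u) = 0, where f satisfies f(conj z) = conj(f z) and f(ωz) = ω f(z) for |ω| = 1. Then the quantity I₁(t) = −∫ₐᵇ ( |u|²/2 + κ·Im(conj(u)·u_t) ) dx is constant in time, where (a,b) is one spatial period. -/
set_option maxRecDepth 8000
open Complex MeasureTheory

private lemma keyt (g : ℝ × ℝ → ℂ) (hg : ContDiff ℝ (⊤ : ℕ∞) g) (x t : ℝ) :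
    HasDerivAt (fun s => g (x, s)) (fderiv ℝ g (x, t) (0, 1)) t := by
  have h1 : HasFDerivAt g (fderiv ℝ g (x, t)) (x, t) :=
    (hg.differentiable (by simp) (x, t)).hasFDerivAt
  have h2 : HasDerivAt (fun s : ℝ => ((x : ℝ), s)) (((0 : ℝ), (1 : ℝ)) : ℝ × ℝ) t :=
    (hasDerivAt_const t x).prodMk (hasDerivAt_id t)
  exact h1.comp_hasDerivAt t h2

private lemma keyx (g : ℝ × ℝ → ℂ) (hg : ContDiff ℝ (⊤ : ℕ∞) g) (x t : ℝ) :
    HasDerivAt (fun y => g (y, t)) (fderiv ℝ g (x, t) (1, 0)) x := by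
  have h1 : HasFDerivAt g (fderiv ℝ g (x, t)) (x, t) :=
    (hg.differentiable (by simp) (x, t)).hasFDerivAt
  have h2 : HasDerivAt (fun y : ℝ => (y, (t : ℝ))) (((1 : ℝ), (0 : ℝ)) : ℝ × ℝ) x :=
    (hasDerivAt_id x).prodMk (hasDerivAt_const x t)
  exact h1.comp_hasDerivAt x h2

private lemma fderivSmooth (g : ℝ × ℝ → ℂ) (hg : ContDiff ℝ (⊤ : ℕ∞) g) (v : ℝ × ℝ) :
    ContDiff ℝ (⊤ : ℕ∞) (fun p => fderiv ℝ g p v) :=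
  (hg.fderiv_right (by simp)).clm_apply contDiff_const

private lemma keytre (g : ℝ × ℝ → ℂ) (hg : ContDiff ℝ (⊤ : ℕ∞) g) (x t : ℝ) :
    HasDerivAt (fun s => (g (x, s)).re) ((fderiv ℝ g (x, t) (0, 1)).re) t := by
  have h := Complex.reCLM.hasFDerivAt.comp_hasDerivAt t (keyt g hg x t)
  simp only [Function.comp_def, Complex.reCLM_apply] at h
  exact h

private lemma keytim (g : ℝ × ℝ → ℂ) (hg : ContDiff ℝ (⊤ : ℕ∞) g) (x t : ℝ) :
    HasDerivAt (fun s => (g (x, s)).im) ((fderiv ℝ g (x, t) (0, 1)).im) t := by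
  have h := Complex.imCLM.hasFDerivAt.comp_hasDerivAt t (keyt g hg x t)
  simp only [Function.comp_def, Complex.imCLM_apply] at h
  exact h

private lemma keyxre (g : ℝ × ℝ → ℂ) (hg : ContDiff ℝ (⊤ : ℕ∞) g) (x t : ℝ) :
    HasDerivAt (fun y => (g (y, t)).re) ((fderiv ℝ g (x, t) (1, 0)).re) x := by
  have h := Complex.reCLM.hasFDerivAt.comp_hasDerivAt x (keyx g hg x t)
  simp only [Function.comp_def, Complex.reCLM_apply] at h
  exact h

private lemma keyxim (g : ℝ × ℝ → ℂ) (hg : ContDiff ℝ (⊤ : ℕ∞) g) (x t : ℝ) :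
    HasDerivAt (fun y => (g (y, t)).im) ((fderiv ℝ g (x, t) (1, 0)).im) x := by
  have h := Complex.imCLM.hasFDerivAt.comp_hasDerivAt x (keyx g hg x t)
  simp only [Function.comp_def, Complex.imCLM_apply] at h
  exact h

private lemma swapInt {F : ℝ → ℝ → ℝ} (hF : Continuous (Function.uncurry F))
    {a b c d : ℝ} (hab : a ≤ b) (hcd : c ≤ d) :
    (∫ x in a..b, ∫ s in c..d, F x s) = ∫ s in c..d, ∫ x in a..b, F x s := by
  rw [intervalIntegral.integral_of_le hab, intervalIntegral.integral_of_le hcd]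
  simp_rw [intervalIntegral.integral_of_le hcd, intervalIntegral.integral_of_le hab]
  apply MeasureTheory.integral_integral_swap
  rw [Measure.prod_restrict]
  have h1 : IntegrableOn (Function.uncurry F) (Set.Icc a b ×ˢ Set.Icc c d) volume :=
    hF.continuousOn.integrableOn_compact (isCompact_Icc.prod isCompact_Icc)
  rw [Measure.volume_eq_prod] at h1
  exact h1.mono_set (Set.prod_mono Set.Ioc_subset_Icc_self Set.Ioc_subset_Icc_self)

private lemma deriv_periodic {g : ℝ → ℂ} {c : ℝ} (h : ∀ y, g (y + c) = g y) (x : ℝ) :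
    deriv g (x + c) = deriv g x := by
  rw [← deriv_comp_add_const]
  congr 1
  exact funext h

private lemma mainAux (κ β a b : ℝ) (f : ℂ → ℂ)
    (hfim : ∀ z : ℂ, ((starRingEnd ℂ z) * f z).im = 0)
    (U V W V2 W2 : ℝ × ℝ → ℂ)
    (hUc : Continuous U) (hVc : Continuous V) (hW2c : Continuous W2)
    (hVd : ∀ x t : ℝ, HasDerivAt (fun s => U (x, s)) (V (x, t)) t)
    (hWd : ∀ x t : ℝ, HasDerivAt (fun y => U (y, t)) (W (x, t)) x)
    (hV2d : ∀ x t : ℝ, HasDerivAt (fun s => V (x, s)) (V2 (x, t)) t)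
    (hW2d : ∀ x t : ℝ, HasDerivAt (fun y => W (y, t)) (W2 (x, t)) x)
    (hper : ∀ x t : ℝ, U (x + (b - a), t) = U (x, t))
    (hperW : ∀ x t : ℝ, W (x + (b - a), t) = W (x, t))
    (hpde : ∀ x t : ℝ, (κ : ℂ) * V2 (x, t) + Complex.I * V (x, t) +
        (β : ℂ) * W2 (x, t) + f (U (x, t)) = 0)
    (t₁ t₂ : ℝ) (h12 : t₁ ≤ t₂) (hab : a ≤ b) :
    (∫ x in a..b, (‖U (x, t₁)‖ ^ 2 / 2 +
        κ * ((starRingEnd ℂ (U (x, t₁))) * V (x, t₁)).im)) =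
    (∫ x in a..b, (‖U (x, t₂)‖ ^ 2 / 2 +
        κ * ((starRingEnd ℂ (U (x, t₂))) * V (x, t₂)).im)) := by
  -- continuity facts
  have hconjU : Continuous fun p : ℝ × ℝ => (starRingEnd ℂ) (U p) :=
    Complex.continuous_conj.comp hUc
  have hDcont : Continuous (fun p : ℝ × ℝ => -β * ((starRingEnd ℂ (U p)) * W2 p).im) :=
    continuous_const.mul (Complex.continuous_im.comp (hconjU.mul hW2c))
  have hGcont : Continuous (fun p : ℝ × ℝ => ‖U p‖ ^ 2 / 2 +
      κ * ((starRingEnd ℂ (U p)) * V p).im) :=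
    (((continuous_norm.comp hUc).pow 2).div_const 2).add
      (continuous_const.mul (Complex.continuous_im.comp (hconjU.mul hVc)))
  -- componentwise derivative helpers
  have hre : ∀ (g g' : ℝ × ℝ → ℂ), (∀ x t : ℝ, HasDerivAt (fun s => g (x, s)) (g' (x, t)) t) →
      ∀ x t : ℝ, HasDerivAt (fun s => (g (x, s)).re) ((g' (x, t)).re) t := by
    intro g g' hg x t
    have h := Complex.reCLM.hasFDerivAt.comp_hasDerivAt t (hg x t)
    simp only [Function.comp_def, Complex.reCLM_apply] at h
    exact h
  have him : ∀ (g g' : ℝ × ℝ → ℂ), (∀ x t : ℝ, HasDerivAt (fun s => g (x, s)) (g' (x, t)) t) →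
      ∀ x t : ℝ, HasDerivAt (fun s => (g (x, s)).im) ((g' (x, t)).im) t := by
    intro g g' hg x t
    have h := Complex.imCLM.hasFDerivAt.comp_hasDerivAt t (hg x t)
    simp only [Function.comp_def, Complex.imCLM_apply] at h
    exact h
  have hrex : ∀ (g g' : ℝ × ℝ → ℂ), (∀ x t : ℝ, HasDerivAt (fun y => g (y, t)) (g' (x, t)) x) →
      ∀ x t : ℝ, HasDerivAt (fun y => (g (y, t)).re) ((g' (x, t)).re) x := by
    intro g g' hg x t
    have h := Complex.reCLM.hasFDerivAt.comp_hasDerivAt x (hg x t)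
    simp only [Function.comp_def, Complex.reCLM_apply] at h
    exact h
  have himx : ∀ (g g' : ℝ × ℝ → ℂ), (∀ x t : ℝ, HasDerivAt (fun y => g (y, t)) (g' (x, t)) x) →
      ∀ x t : ℝ, HasDerivAt (fun y => (g (y, t)).im) ((g' (x, t)).im) x := by
    intro g g' hg x t
    have h := Complex.imCLM.hasFDerivAt.comp_hasDerivAt x (hg x t)
    simp only [Function.comp_def, Complex.imCLM_apply] at h
    exact h
  -- t-derivative of the density
  have hGt : ∀ x t : ℝ, HasDerivAt (fun s => ‖U (x, s)‖ ^ 2 / 2 +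
      κ * ((starRingEnd ℂ (U (x, s))) * V (x, s)).im)
      (-β * ((starRingEnd ℂ (U (x, t))) * W2 (x, t)).im) t := by
    intro x t
    have hPr := hre U V hVd x t
    have hPi := him U V hVd x t
    have hQr := hre V V2 hV2d x t
    have hQi := him V V2 hV2d x t
    have h0 := (((hPr.mul hPr).add (hPi.mul hPi)).div_const 2).add
      (((hPr.mul hQi).sub (hPi.mul hQr)).const_mul κ)
    have hfeq : (fun s => ‖U (x, s)‖ ^ 2 / 2 +
        κ * ((starRingEnd ℂ (U (x, s))) * V (x, s)).im)
        = fun s => ((U (x, s)).re * (U (x, s)).re + (U (x, s)).im * (U (x, s)).im) / 2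
          + κ * ((U (x, s)).re * (V (x, s)).im - (U (x, s)).im * (V (x, s)).re) := by
      funext s
      rw [Complex.sq_norm, Complex.normSq_apply, Complex.mul_im]
      simp only [Complex.conj_re, Complex.conj_im]
      ring
    rw [hfeq]
    convert h0 using 1
    · rfl
    · rfl
    · rfl
    -- value identity via the PDE
    have hreP := congrArg Complex.re (hpde x t)
    have himP := congrArg Complex.im (hpde x t)
    simp only [Complex.add_re, Complex.add_im, Complex.mul_re, Complex.mul_im,
      Complex.I_re, Complex.I_im, Complex.ofReal_re, Complex.ofReal_im,
      Complex.zero_re, Complex.zero_im] at hreP himP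
    have hfim' := hfim (U (x, t))
    rw [Complex.mul_im] at hfim'
    simp only [Complex.conj_re, Complex.conj_im] at hfim'
    rw [Complex.mul_im]
    simp only [Complex.conj_re, Complex.conj_im]
    linear_combination (-(U (x, t)).re) * himP + (U (x, t)).im * hreP + hfim'
  -- x-derivative realisation of the same quantity
  have hHx : ∀ x t : ℝ, HasDerivAt (fun y => -β * ((starRingEnd ℂ (U (y, t))) * W (y, t)).im)
      (-β * ((starRingEnd ℂ (U (x, t))) * W2 (x, t)).im) x := by
    intro x t
    have hAr := hrex U W hWd x t
    have hAi := himx U W hWd x t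
    have hBr := hrex W W2 hW2d x t
    have hBi := himx W W2 hW2d x t
    have h0 := (((hAr.mul hBi).sub (hAi.mul hBr)).const_mul (-β))
    have hfeq : (fun y => -β * ((starRingEnd ℂ (U (y, t))) * W (y, t)).im)
        = fun y => -β * ((U (y, t)).re * (W (y, t)).im - (U (y, t)).im * (W (y, t)).re) := by
      funext y
      rw [Complex.mul_im]
      simp only [Complex.conj_re, Complex.conj_im]
      ring
    rw [hfeq]
    convert h0 using 1
    · rfl
    · rfl
    · rfl
    rw [Complex.mul_im]
    simp only [Complex.conj_re, Complex.conj_im]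
    ring
  -- the inner x-integral vanishes
  have hInner : ∀ t : ℝ, (∫ x in a..b, -β * ((starRingEnd ℂ (U (x, t))) * W2 (x, t)).im) = 0 := by
    intro t
    have hint : IntervalIntegrable (fun x => -β * ((starRingEnd ℂ (U (x, t))) * W2 (x, t)).im)
        volume a b :=
      (hDcont.comp (continuous_id.prodMk continuous_const)).intervalIntegrable a b
    rw [intervalIntegral.integral_eq_sub_of_hasDerivAt (fun x _ => hHx x t) hint]
    have hb : b = a + (b - a) := by ring
    rw [hb, hper, hperW, sub_self]
  -- FTC in time, pointwise in x
  have hFTCt : ∀ x : ℝ,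
      (‖U (x, t₂)‖ ^ 2 / 2 + κ * ((starRingEnd ℂ (U (x, t₂))) * V (x, t₂)).im)
      - (‖U (x, t₁)‖ ^ 2 / 2 + κ * ((starRingEnd ℂ (U (x, t₁))) * V (x, t₁)).im)
      = ∫ s in t₁..t₂, -β * ((starRingEnd ℂ (U (x, s))) * W2 (x, s)).im := by
    intro x
    have hint : IntervalIntegrable (fun s => -β * ((starRingEnd ℂ (U (x, s))) * W2 (x, s)).im)
        volume t₁ t₂ :=
      (hDcont.comp (continuous_const.prodMk continuous_id)).intervalIntegrable t₁ t₂
    exact (intervalIntegral.integral_eq_sub_of_hasDerivAt (fun s _ => hGt x s) hint).symm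
  -- assemble
  have hint1 : IntervalIntegrable (fun x => ‖U (x, t₁)‖ ^ 2 / 2 +
      κ * ((starRingEnd ℂ (U (x, t₁))) * V (x, t₁)).im) volume a b :=
    (hGcont.comp (continuous_id.prodMk continuous_const)).intervalIntegrable a b
  have hint2 : IntervalIntegrable (fun x => ‖U (x, t₂)‖ ^ 2 / 2 +
      κ * ((starRingEnd ℂ (U (x, t₂))) * V (x, t₂)).im) volume a b :=
    (hGcont.comp (continuous_id.prodMk continuous_const)).intervalIntegrable a b
  have hkey : (∫ x in a..b, (‖U (x, t₂)‖ ^ 2 / 2 +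
        κ * ((starRingEnd ℂ (U (x, t₂))) * V (x, t₂)).im))
      - (∫ x in a..b, (‖U (x, t₁)‖ ^ 2 / 2 +
        κ * ((starRingEnd ℂ (U (x, t₁))) * V (x, t₁)).im)) = 0 := by
    rw [← intervalIntegral.integral_sub hint2 hint1]
    have e1 : (∫ x in a..b, ((‖U (x, t₂)‖ ^ 2 / 2 +
        κ * ((starRingEnd ℂ (U (x, t₂))) * V (x, t₂)).im)
        - (‖U (x, t₁)‖ ^ 2 / 2 +
        κ * ((starRingEnd ℂ (U (x, t₁))) * V (x, t₁)).im)))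
        = ∫ x in a..b, ∫ s in t₁..t₂, -β * ((starRingEnd ℂ (U (x, s))) * W2 (x, s)).im := by
      apply intervalIntegral.integral_congr
      intro x _
      exact hFTCt x
    have eswap : (∫ x in a..b, ∫ s in t₁..t₂,
        -β * ((starRingEnd ℂ (U (x, s))) * W2 (x, s)).im)
        = ∫ s in t₁..t₂, ∫ x in a..b,
        -β * ((starRingEnd ℂ (U (x, s))) * W2 (x, s)).im :=
      swapInt (F := fun x s => -β * ((starRingEnd ℂ (U (x, s))) * W2 (x, s)).im)
        (by exact hDcont) hab h12
    rw [e1, eswap]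
    have e2 : (∫ s in t₁..t₂, ∫ x in a..b,
        -β * ((starRingEnd ℂ (U (x, s))) * W2 (x, s)).im) = ∫ s in t₁..t₂, (0 : ℝ) := by
      apply intervalIntegral.integral_congr
      intro s _
      exact hInner s
    rw [e2, intervalIntegral.integral_zero]
  linarith [hkey]
private lemma conj_mul_f_im (f : ℂ → ℂ)
    (hf1 : ∀ z : ℂ, f (starRingEnd ℂ z) = starRingEnd ℂ (f z))
    (hf2 : ∀ ω z : ℂ, ‖ω‖ = 1 → f (ω * z) = ω * f z) (z : ℂ) :
    ((starRingEnd ℂ z) * f z).im = 0 := by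
  by_cases hz : z = 0
  · have h0 : f 0 = 0 := by
      have h := hf2 (-1) 0 (by simp)
      simp only [mul_zero, neg_mul, one_mul] at h
      linear_combination h / 2
    simp [hz, h0]
  · set r : ℝ := ‖z‖ with hr
    have hrpos : 0 < r := norm_pos_iff.mpr hz
    have hrne : (r : ℂ) ≠ 0 := by exact_mod_cast hrpos.ne'
    set ω : ℂ := z / (r : ℂ) with hω
    have hωabs : ‖ω‖ = 1 := by
      rw [hω, norm_div, Complex.norm_of_nonneg hrpos.le, ← hr, div_self (by positivity)]
    have hzeq : z = ω * (r : ℂ) := by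
      rw [hω]; field_simp
    have hfr : (f (r : ℂ)).im = 0 := by
      have h := hf1 (r : ℂ)
      rw [Complex.conj_ofReal] at h
      have h2 := congrArg Complex.im h
      simp only [Complex.conj_im] at h2
      linarith
    have hcc : (starRingEnd ℂ z) * f z = (r : ℂ) * f (r : ℂ) := by
      rw [hzeq, hf2 ω (r : ℂ) hωabs, map_mul, Complex.conj_ofReal]
      have hωω : (starRingEnd ℂ ω) * ω = 1 := by
        rw [mul_comm, Complex.mul_conj]
        rw [← Complex.sq_norm, hωabs]
        norm_num
      calc (starRingEnd ℂ ω) * (r : ℂ) * (ω * f (r : ℂ))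
          = ((starRingEnd ℂ ω) * ω) * ((r : ℂ) * f (r : ℂ)) := by ring
        _ = (r : ℂ) * f (r : ℂ) := by rw [hωω, one_mul]
    rw [hcc]
    simp [Complex.mul_im, hfr]
theorem stmt8 (κ β a b : ℝ) (hκ : 0 < κ) (hβ : 0 < β) (hab : a < b)
    (f : ℂ → ℂ)
    (hf1 : ∀ z : ℂ, f (starRingEnd ℂ z) = starRingEnd ℂ (f z))
    (hf2 : ∀ ω z : ℂ, ‖ω‖ = 1 → f (ω * z) = ω * f z)
    (u : ℝ → ℝ → ℂ)
    (hu : ContDiff ℝ (⊤ : ℕ∞) fun p : ℝ × ℝ => u p.1 p.2)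
    (hper : ∀ x t : ℝ, u (x + (b - a)) t = u x t)
    (hpde : ∀ x t : ℝ,
      (κ : ℂ) * deriv (deriv (u x)) t + Complex.I * deriv (u x) t +
        (β : ℂ) * deriv (fun y => deriv (fun y' => u y' t) y) x + f (u x t) = 0) :
    ∀ t₁ t₂ : ℝ,
      (-(∫ x in a..b, (‖u x t₁‖ ^ 2 / 2 +
          κ * ((starRingEnd ℂ (u x t₁)) * deriv (u x) t₁).im))) =
      (-(∫ x in a..b, (‖u x t₂‖ ^ 2 / 2 +
          κ * ((starRingEnd ℂ (u x t₂)) * deriv (u x) t₂).im))) := by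
  have hfim := conj_mul_f_im f hf1 hf2
  set U : ℝ × ℝ → ℂ := fun p => u p.1 p.2 with hUdef
  have hUc : ContDiff ℝ (⊤ : ℕ∞) U := hu
  set V : ℝ × ℝ → ℂ := fun p => fderiv ℝ U p (0, 1) with hVdef
  set W : ℝ × ℝ → ℂ := fun p => fderiv ℝ U p (1, 0) with hWdef
  have hVc : ContDiff ℝ (⊤ : ℕ∞) V := fderivSmooth U hUc _
  have hWc : ContDiff ℝ (⊤ : ℕ∞) W := fderivSmooth U hUc _
  set V2 : ℝ × ℝ → ℂ := fun p => fderiv ℝ V p (0, 1) with hV2def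
  set W2 : ℝ × ℝ → ℂ := fun p => fderiv ℝ W p (1, 0) with hW2def
  have hV2c : ContDiff ℝ (⊤ : ℕ∞) V2 := fderivSmooth V hVc _
  have hW2c : ContDiff ℝ (⊤ : ℕ∞) W2 := fderivSmooth W hWc _
  have hVd : ∀ x t : ℝ, HasDerivAt (fun s => U (x, s)) (V (x, t)) t :=
    fun x t => keyt U hUc x t
  have hWd : ∀ x t : ℝ, HasDerivAt (fun y => U (y, t)) (W (x, t)) x :=
    fun x t => keyx U hUc x t
  have hV2d : ∀ x t : ℝ, HasDerivAt (fun s => V (x, s)) (V2 (x, t)) t :=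
    fun x t => keyt V hVc x t
  have hW2d : ∀ x t : ℝ, HasDerivAt (fun y => W (y, t)) (W2 (x, t)) x :=
    fun x t => keyx W hWc x t
  -- derivative translations
  have hderiv_t : ∀ x t : ℝ, deriv (u x) t = V (x, t) := by
    intro x t
    exact HasDerivAt.deriv (f := u x) (hVd x t)
  have hderiv_tt : ∀ x t : ℝ, deriv (deriv (u x)) t = V2 (x, t) := by
    intro x t
    have h1 : deriv (u x) = fun s => V (x, s) := funext fun s => hderiv_t x s
    rw [h1]
    exact (hV2d x t).deriv
  have hderiv_x : ∀ x t : ℝ, deriv (fun y' => u y' t) x = W (x, t) := by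
    intro x t
    exact HasDerivAt.deriv (f := fun y' => u y' t) (hWd x t)
  have hderiv_xx : ∀ x t : ℝ, deriv (fun y => deriv (fun y' => u y' t) y) x = W2 (x, t) := by
    intro x t
    have h1 : (fun y => deriv (fun y' => u y' t) y) = fun y => W (y, t) :=
      funext fun y => hderiv_x y t
    rw [h1]
    exact (hW2d x t).deriv
  have hperU : ∀ x t : ℝ, U (x + (b - a), t) = U (x, t) := fun x t => hper x t
  have hperW : ∀ x t : ℝ, W (x + (b - a), t) = W (x, t) := by
    intro x t
    rw [← hderiv_x (x + (b - a)) t, ← hderiv_x x t]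
    exact deriv_periodic (fun y => hper y t) x
  have hpde' : ∀ x t : ℝ, (κ : ℂ) * V2 (x, t) + Complex.I * V (x, t) +
      (β : ℂ) * W2 (x, t) + f (U (x, t)) = 0 := by
    intro x t
    have h := hpde x t
    rwa [hderiv_tt, hderiv_t, hderiv_xx] at h
  have e : ∀ s : ℝ, (∫ x in a..b, (‖u x s‖ ^ 2 / 2 +
      κ * ((starRingEnd ℂ (u x s)) * deriv (u x) s).im))
      = ∫ x in a..b, (‖U (x, s)‖ ^ 2 / 2 +
      κ * ((starRingEnd ℂ (U (x, s))) * V (x, s)).im) := by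
    intro s
    apply intervalIntegral.integral_congr
    intro x _
    show ‖u x s‖ ^ 2 / 2 + κ * ((starRingEnd ℂ (u x s)) * deriv (u x) s).im
        = ‖U (x, s)‖ ^ 2 / 2 + κ * ((starRingEnd ℂ (U (x, s))) * V (x, s)).im
    rw [hderiv_t x s]
  have key : ∀ s₁ s₂ : ℝ, s₁ ≤ s₂ →
      (∫ x in a..b, (‖u x s₁‖ ^ 2 / 2 +
        κ * ((starRingEnd ℂ (u x s₁)) * deriv (u x) s₁).im)) =
      (∫ x in a..b, (‖u x s₂‖ ^ 2 / 2 +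
        κ * ((starRingEnd ℂ (u x s₂)) * deriv (u x) s₂).im)) := by
    intro s₁ s₂ h12
    rw [e s₁, e s₂]
    exact mainAux κ β a b f hfim U V W V2 W2 hUc.continuous hVc.continuous hW2c.continuous
      hVd hWd hV2d hW2d hperU hperW hpde' s₁ s₂ h12 hab.le
  intro t₁ t₂
  rcases le_total t₁ t₂ with h | h
  · rw [key t₁ t₂ h]
  · rw [key t₂ t₁ h]
end

section
/- Let u : ℝ × ℝ → ℂ be a smooth, spatially periodic solution of κ u_tt + i u_t + β u_xx + f(u) = 0, where f = ∂V/∂(conj u) for a smooth real-valued potential V. Then the quantity I₂(t) = ∫ₐᵇ ( −κ·Re(u_x·conj(u_t)) + (1/2)·Im(u·conj(u_x)) ) dx is constant in time. -/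
open Complex MeasureTheory

noncomputable section Stmt9Aux

/-- partial derivative in the first (spatial) variable -/
def st9pdx (F : ℝ × ℝ → ℂ) : ℝ × ℝ → ℂ := fun p => fderiv ℝ F p (1, 0)

/-- partial derivative in the second (time) variable -/
def st9pdt (F : ℝ × ℝ → ℂ) : ℝ × ℝ → ℂ := fun p => fderiv ℝ F p (0, 1)

lemma st9pdx_contDiff {F : ℝ × ℝ → ℂ} (hF : ContDiff ℝ (⊤ : ℕ∞) F) : ContDiff ℝ (⊤ : ℕ∞) (st9pdx F) :=
  (hF.fderiv_right (by simp)).clm_apply contDiff_const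

lemma st9pdt_contDiff {F : ℝ × ℝ → ℂ} (hF : ContDiff ℝ (⊤ : ℕ∞) F) : ContDiff ℝ (⊤ : ℕ∞) (st9pdt F) :=
  (hF.fderiv_right (by simp)).clm_apply contDiff_const

lemma st9hasDerivAt_x {F : ℝ × ℝ → ℂ} (hF : ContDiff ℝ (⊤ : ℕ∞) F) (x t : ℝ) :
    HasDerivAt (fun y => F (y, t)) (st9pdx F (x, t)) x := by
  have h1 : HasFDerivAt F (fderiv ℝ F (x, t)) (x, t) :=
    (hF.differentiable (by simp) (x, t)).hasFDerivAt
  have h2 : HasDerivAt (fun y : ℝ => ((y, t) : ℝ × ℝ)) ((1 : ℝ), (0 : ℝ)) x :=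
    (hasDerivAt_id x).prodMk (hasDerivAt_const x t)
  exact h1.comp_hasDerivAt x h2

lemma st9hasDerivAt_t {F : ℝ × ℝ → ℂ} (hF : ContDiff ℝ (⊤ : ℕ∞) F) (x t : ℝ) :
    HasDerivAt (fun τ => F (x, τ)) (st9pdt F (x, t)) t := by
  have h1 : HasFDerivAt F (fderiv ℝ F (x, t)) (x, t) :=
    (hF.differentiable (by simp) (x, t)).hasFDerivAt
  have h2 : HasDerivAt (fun τ : ℝ => ((x, τ) : ℝ × ℝ)) ((0 : ℝ), (1 : ℝ)) t :=
    (hasDerivAt_const t x).prodMk (hasDerivAt_id t)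
  exact h1.comp_hasDerivAt t h2

lemma st9schwarz {F : ℝ × ℝ → ℂ} (hF : ContDiff ℝ (⊤ : ℕ∞) F) (p : ℝ × ℝ) :
    st9pdx (st9pdt F) p = st9pdt (st9pdx F) p := by
  have hs : IsSymmSndFDerivAt ℝ F p :=
    hF.contDiffAt.isSymmSndFDerivAt (by rw [minSmoothness_of_isRCLikeNormedField]; exact WithTop.coe_le_coe.mpr le_top)
  have hdF : DifferentiableAt ℝ (fderiv ℝ F) p :=
    ((hF.fderiv_right (m := (⊤ : ℕ∞)) (by simp)).differentiable (by simp)) p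
  have e1 : fderiv ℝ (fun q => fderiv ℝ F q ((0 : ℝ), (1 : ℝ))) p
      = (fderiv ℝ (fderiv ℝ F) p).flip (0, 1) := by
    rw [fderiv_clm_apply hdF (differentiableAt_const _)]
    simp
  have e2 : fderiv ℝ (fun q => fderiv ℝ F q ((1 : ℝ), (0 : ℝ))) p
      = (fderiv ℝ (fderiv ℝ F) p).flip (1, 0) := by
    rw [fderiv_clm_apply hdF (differentiableAt_const _)]
    simp
  show fderiv ℝ (st9pdt F) p (1, 0) = fderiv ℝ (st9pdx F) p (0, 1)
  unfold st9pdt st9pdx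
  rw [e1, e2]
  simpa using hs (1, 0) (0, 1)

lemma st9periodic_fderiv {F : ℝ × ℝ → ℂ} (hF : ContDiff ℝ (⊤ : ℕ∞) F) (c : ℝ × ℝ)
    (h : ∀ p, F (p + c) = F p) (p : ℝ × ℝ) : fderiv ℝ F (p + c) = fderiv ℝ F p := by
  have hid : HasFDerivAt (fun q : ℝ × ℝ => q + c) (ContinuousLinearMap.id ℝ (ℝ × ℝ)) p :=
    (hasFDerivAt_id p).add_const c
  have h1 : HasFDerivAt (fun q => F (q + c))
      ((fderiv ℝ F (p + c)).comp (ContinuousLinearMap.id ℝ (ℝ × ℝ))) p :=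
    ((hF.differentiable (by simp) (p + c)).hasFDerivAt).comp p hid
  have h2 : HasFDerivAt F (fderiv ℝ F (p + c)) p := by
    have heq : (fun q => F (q + c)) = F := funext h
    rw [heq] at h1
    simpa using h1
  exact (h2.fderiv).symm

lemma st9hdConj {f : ℝ → ℂ} {f' : ℂ} {t : ℝ} (h : HasDerivAt f f' t) :
    HasDerivAt (fun τ => (starRingEnd ℂ) (f τ)) ((starRingEnd ℂ) f') t := by
  simpa using h.star

lemma st9hdRe {f : ℝ → ℂ} {f' : ℂ} {t : ℝ} (h : HasDerivAt f f' t) :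
    HasDerivAt (fun τ => (f τ).re) f'.re t := by
  have := (Complex.reCLM.hasFDerivAt (x := f t)).comp_hasDerivAt t h
  simp only [Function.comp_def, Complex.reCLM_apply] at this
  exact this

lemma st9hdIm {f : ℝ → ℂ} {f' : ℂ} {t : ℝ} (h : HasDerivAt f f' t) :
    HasDerivAt (fun τ => (f τ).im) f'.im t := by
  have := (Complex.imCLM.hasFDerivAt (x := f t)).comp_hasDerivAt t h
  simp only [Function.comp_def, Complex.imCLM_apply] at this
  exact this

lemma st9clm_apply (L : ℂ →L[ℝ] ℝ) (z : ℂ) :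
    L z = z.re * L 1 + z.im * L Complex.I := by
  have hz : z = z.re • (1 : ℂ) + z.im • Complex.I := by
    simp [Complex.real_smul]
  rw [show L z = L (z.re • (1 : ℂ) + z.im • Complex.I) from by rw [← hz]]
  rw [map_add, L.map_smul, L.map_smul]
  simp [smul_eq_mul]

end Stmt9Aux

theorem stmt9 (κ β a b : ℝ) (hκ : 0 < κ) (hβ : 0 < β) (hab : a < b)
    (V : ℂ → ℝ) (hV : ContDiff ℝ (⊤ : ℕ∞) V)
    (f : ℂ → ℂ)
    (hf : ∀ z : ℂ, f z = (1 / 2 : ℂ) *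
      (((fderiv ℝ V z) 1 : ℝ) + Complex.I * ((fderiv ℝ V z) Complex.I : ℝ)))
    (u : ℝ → ℝ → ℂ)
    (hu : ContDiff ℝ (⊤ : ℕ∞) fun p : ℝ × ℝ => u p.1 p.2)
    (hper : ∀ x t : ℝ, u (x + (b - a)) t = u x t)
    (hpde : ∀ x t : ℝ,
      (κ : ℂ) * deriv (deriv (u x)) t + Complex.I * deriv (u x) t +
        (β : ℂ) * deriv (fun y => deriv (fun y' => u y' t) y) x + f (u x t) = 0) :
    ∀ t₁ t₂ : ℝ,
      (∫ x in a..b,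
        (-κ * ((deriv (fun y => u y t₁) x) * starRingEnd ℂ (deriv (u x) t₁)).re +
          (1 / 2) * (u x t₁ * starRingEnd ℂ (deriv (fun y => u y t₁) x)).im)) =
      (∫ x in a..b,
        (-κ * ((deriv (fun y => u y t₂) x) * starRingEnd ℂ (deriv (u x) t₂)).re +
          (1 / 2) * (u x t₂ * starRingEnd ℂ (deriv (fun y => u y t₂) x)).im)) := by
  intro t₁ t₂
  set U : ℝ × ℝ → ℂ := fun p => u p.1 p.2 with hUdef
  have hUc : ContDiff ℝ (⊤ : ℕ∞) U := hu
  have hUx : ContDiff ℝ (⊤ : ℕ∞) (st9pdx U) := st9pdx_contDiff hUc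
  have hUt : ContDiff ℝ (⊤ : ℕ∞) (st9pdt U) := st9pdt_contDiff hUc
  -- first derivatives as HasDerivAt
  have hDx : ∀ x t, HasDerivAt (fun y => U (y, t)) (st9pdx U (x, t)) x :=
    fun x t => st9hasDerivAt_x hUc x t
  have hDt : ∀ x t, HasDerivAt (fun τ => U (x, τ)) (st9pdt U (x, t)) t :=
    fun x t => st9hasDerivAt_t hUc x t
  have hDxx : ∀ x t, HasDerivAt (fun y => st9pdx U (y, t)) (st9pdx (st9pdx U) (x, t)) x :=
    fun x t => st9hasDerivAt_x hUx x t
  have hDxt : ∀ x t, HasDerivAt (fun τ => st9pdx U (x, τ)) (st9pdt (st9pdx U) (x, t)) t :=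
    fun x t => st9hasDerivAt_t hUx x t
  have hDtx : ∀ x t, HasDerivAt (fun y => st9pdt U (y, t)) (st9pdx (st9pdt U) (x, t)) x :=
    fun x t => st9hasDerivAt_x hUt x t
  have hDtt : ∀ x t, HasDerivAt (fun τ => st9pdt U (x, τ)) (st9pdt (st9pdt U) (x, t)) t :=
    fun x t => st9hasDerivAt_t hUt x t
  -- bridge to `deriv` in the statement
  have e1 : ∀ x t, deriv (u x) t = st9pdt U (x, t) := fun x t => (hDt x t).deriv
  have e2 : ∀ x t, deriv (fun y => u y t) x = st9pdx U (x, t) := fun x t => (hDx x t).deriv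
  have e3 : ∀ x t, deriv (deriv (u x)) t = st9pdt (st9pdt U) (x, t) := by
    intro x t
    have h : deriv (u x) = fun τ => st9pdt U (x, τ) := funext fun τ => e1 x τ
    rw [h]; exact (hDtt x t).deriv
  have e4 : ∀ x t, deriv (fun y => deriv (fun y' => u y' t) y) x = st9pdx (st9pdx U) (x, t) := by
    intro x t
    have h : (fun y => deriv (fun y' => u y' t) y) = fun y => st9pdx U (y, t) :=
      funext fun y => e2 y t
    rw [h]; exact (hDxx x t).deriv
  have hpde' : ∀ x t, (κ : ℂ) * st9pdt (st9pdt U) (x, t) + Complex.I * st9pdt U (x, t) +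
      (β : ℂ) * st9pdx (st9pdx U) (x, t) + f (U (x, t)) = 0 := by
    intro x t
    have h := hpde x t
    rwa [e1, e3, e4] at h
  have hsy : ∀ p, st9pdx (st9pdt U) p = st9pdt (st9pdx U) p := st9schwarz hUc
  -- the integrand and its time derivative, and the flux
  set g : ℝ → ℝ → ℝ := fun t x =>
    -κ * (st9pdx U (x, t) * (starRingEnd ℂ) (st9pdt U (x, t))).re +
      (1 / 2) * (U (x, t) * (starRingEnd ℂ) (st9pdx U (x, t))).im with hg
  set G : ℝ → ℝ → ℝ := fun t x =>
    -κ * (st9pdt (st9pdx U) (x, t) * (starRingEnd ℂ) (st9pdt U (x, t)) +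
        st9pdx U (x, t) * (starRingEnd ℂ) (st9pdt (st9pdt U) (x, t))).re +
      (1 / 2) * (st9pdt U (x, t) * (starRingEnd ℂ) (st9pdx U (x, t)) +
        U (x, t) * (starRingEnd ℂ) (st9pdt (st9pdx U) (x, t))).im with hG
  set Fl : ℝ → ℝ → ℝ := fun t x =>
    -(κ / 2) * (st9pdt U (x, t) * (starRingEnd ℂ) (st9pdt U (x, t))).re +
      (β / 2) * (st9pdx U (x, t) * (starRingEnd ℂ) (st9pdx U (x, t))).re +
      (1 / 2) * V (U (x, t)) +
      (1 / 2) * (U (x, t) * (starRingEnd ℂ) (st9pdt U (x, t))).im with hFl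
  -- time derivative of the integrand
  have hgt : ∀ x t, HasDerivAt (fun τ => g τ x) (G t x) t := by
    intro x t
    have hA : HasDerivAt (fun τ => st9pdx U (x, τ) * (starRingEnd ℂ) (st9pdt U (x, τ)))
        (st9pdt (st9pdx U) (x, t) * (starRingEnd ℂ) (st9pdt U (x, t)) +
          st9pdx U (x, t) * (starRingEnd ℂ) (st9pdt (st9pdt U) (x, t))) t :=
      (hDxt x t).mul (st9hdConj (hDtt x t))
    have hB : HasDerivAt (fun τ => U (x, τ) * (starRingEnd ℂ) (st9pdx U (x, τ)))
        (st9pdt U (x, t) * (starRingEnd ℂ) (st9pdx U (x, t)) +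
          U (x, t) * (starRingEnd ℂ) (st9pdt (st9pdx U) (x, t))) t :=
      (hDt x t).mul (st9hdConj (hDxt x t))
    have := (HasDerivAt.const_mul (-κ) (st9hdRe hA)).add
      (HasDerivAt.const_mul ((1 : ℝ) / 2) (st9hdIm hB))
    exact this
  -- spatial derivative of the flux equals the time derivative of the integrand
  have key : ∀ x t, HasDerivAt (fun y => Fl t y) (G t x) x := by
    intro x t
    have hV' : HasDerivAt (fun y => V (U (y, t))) (fderiv ℝ V (U (x, t)) (st9pdx U (x, t))) x :=
      ((hV.differentiable (by simp) (U (x, t))).hasFDerivAt).comp_hasDerivAt x (hDx x t)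
    have hA : HasDerivAt (fun y => st9pdt U (y, t) * (starRingEnd ℂ) (st9pdt U (y, t)))
        (st9pdx (st9pdt U) (x, t) * (starRingEnd ℂ) (st9pdt U (x, t)) +
          st9pdt U (x, t) * (starRingEnd ℂ) (st9pdx (st9pdt U) (x, t))) x :=
      (hDtx x t).mul (st9hdConj (hDtx x t))
    have hB : HasDerivAt (fun y => st9pdx U (y, t) * (starRingEnd ℂ) (st9pdx U (y, t)))
        (st9pdx (st9pdx U) (x, t) * (starRingEnd ℂ) (st9pdx U (x, t)) +
          st9pdx U (x, t) * (starRingEnd ℂ) (st9pdx (st9pdx U) (x, t))) x :=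
      (hDxx x t).mul (st9hdConj (hDxx x t))
    have hC : HasDerivAt (fun y => U (y, t) * (starRingEnd ℂ) (st9pdt U (y, t)))
        (st9pdx U (x, t) * (starRingEnd ℂ) (st9pdt U (x, t)) +
          U (x, t) * (starRingEnd ℂ) (st9pdx (st9pdt U) (x, t))) x :=
      (hDx x t).mul (st9hdConj (hDtx x t))
    have hsum := (((HasDerivAt.const_mul (-(κ / 2)) (st9hdRe hA)).add
        (HasDerivAt.const_mul (β / 2) (st9hdRe hB))).add
        (HasDerivAt.const_mul ((1 : ℝ) / 2) hV')).add
        (HasDerivAt.const_mul ((1 : ℝ) / 2) (st9hdIm hC))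
    have hFlx : HasDerivAt (fun y => Fl t y)
        (-(κ / 2) * (st9pdx (st9pdt U) (x, t) * (starRingEnd ℂ) (st9pdt U (x, t)) +
            st9pdt U (x, t) * (starRingEnd ℂ) (st9pdx (st9pdt U) (x, t))).re +
          (β / 2) * (st9pdx (st9pdx U) (x, t) * (starRingEnd ℂ) (st9pdx U (x, t)) +
            st9pdx U (x, t) * (starRingEnd ℂ) (st9pdx (st9pdx U) (x, t))).re +
          (1 / 2) * (fderiv ℝ V (U (x, t)) (st9pdx U (x, t))) +
          (1 / 2) * (st9pdx U (x, t) * (starRingEnd ℂ) (st9pdt U (x, t)) +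
            U (x, t) * (starRingEnd ℂ) (st9pdx (st9pdt U) (x, t))).im) x := by
      exact hsum
    -- now the algebraic identity
    convert hFlx using 1
    set A := st9pdx U (x, t)
    set B := st9pdt U (x, t)
    set C := st9pdx (st9pdx U) (x, t)
    set T := st9pdt (st9pdt U) (x, t)
    set E := U (x, t)
    have hD : st9pdx (st9pdt U) (x, t) = st9pdt (st9pdx U) (x, t) := hsy (x, t)
    set D := st9pdt (st9pdx U) (x, t)
    rw [hD]
    have hT : (κ : ℂ) * T = -(Complex.I * B + (β : ℂ) * C + f E) := by
      linear_combination hpde' x t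
    have h1 : κ * T.re = B.im - β * C.re - (f E).re := by
      have h := congrArg Complex.re hT
      simp [Complex.mul_re, Complex.add_re, Complex.mul_im] at h
      linarith
    have h2 : κ * T.im = -B.re - β * C.im - (f E).im := by
      have h := congrArg Complex.im hT
      simp [Complex.mul_re, Complex.add_im, Complex.mul_im] at h
      linarith
    have h3 : (f E).re = (fderiv ℝ V E 1) / 2 := by
      rw [hf E]; simp [Complex.mul_re, Complex.add_re, Complex.mul_im, Complex.add_im]; ring
    have h4 : (f E).im = (fderiv ℝ V E Complex.I) / 2 := by
      rw [hf E]; simp [Complex.mul_re, Complex.add_re, Complex.mul_im, Complex.add_im]; ring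
    rw [h3] at h1
    rw [h4] at h2
    rw [st9clm_apply (fderiv ℝ V E) A]
    simp only [hG, Complex.add_re, Complex.add_im, Complex.mul_re, Complex.mul_im,
      Complex.conj_re, Complex.conj_im]
    linear_combination (-(A.re)) * h1 + (-(A.im)) * h2
  -- continuity facts
  have c0 : Continuous U := hUc.continuous
  have cx : Continuous (st9pdx U) := hUx.continuous
  have ct : Continuous (st9pdt U) := hUt.continuous
  have cxt : Continuous (st9pdt (st9pdx U)) := (st9pdt_contDiff hUx).continuous
  have ctt : Continuous (st9pdt (st9pdt U)) := (st9pdt_contDiff hUt).continuous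
  have cgp : Continuous (fun p : ℝ × ℝ => g p.2 p.1) := by
    simp only [hg]
    fun_prop
  have cGp : Continuous (fun p : ℝ × ℝ => G p.2 p.1) := by
    simp only [hG]
    fun_prop
  -- the integral of the flux derivative vanishes by periodicity
  have hIzero : ∀ t, (∫ x in a..b, G t x) = 0 := by
    intro t
    have hint : IntervalIntegrable (fun x => G t x) volume a b :=
      (cGp.comp (continuous_id.prodMk continuous_const)).intervalIntegrable a b
    have heq : (∫ x in a..b, G t x) = Fl t b - Fl t a :=
      intervalIntegral.integral_eq_sub_of_hasDerivAt (fun x _ => key x t) hint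
    rw [heq]
    have hperU : ∀ p : ℝ × ℝ, U (p + ((b - a : ℝ), (0 : ℝ))) = U p := by
      intro p
      show u (p.1 + (b - a)) (p.2 + 0) = u p.1 p.2
      rw [add_zero]; exact hper p.1 p.2
    have hab' : ((a : ℝ), t) + ((b - a : ℝ), (0 : ℝ)) = ((b : ℝ), t) := by
      simp [Prod.ext_iff]
    have pU : U (b, t) = U (a, t) := by
      have := hperU (a, t); rwa [hab'] at this
    have pfd : fderiv ℝ U ((b : ℝ), t) = fderiv ℝ U ((a : ℝ), t) := by
      have := st9periodic_fderiv hUc _ hperU ((a : ℝ), t); rwa [hab'] at this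
    have pUx : st9pdx U (b, t) = st9pdx U (a, t) := by
      show fderiv ℝ U ((b : ℝ), t) (1, 0) = fderiv ℝ U ((a : ℝ), t) (1, 0); rw [pfd]
    have pUt : st9pdt U (b, t) = st9pdt U (a, t) := by
      show fderiv ℝ U ((b : ℝ), t) (0, 1) = fderiv ℝ U ((a : ℝ), t) (0, 1); rw [pfd]
    simp [hFl, pU, pUx, pUt]
  -- derivative of the integral
  have hderiv : ∀ t, HasDerivAt (fun τ => ∫ x in a..b, g τ x) (∫ x in a..b, G t x) t := by
    intro t
    obtain ⟨C, hC⟩ := (isCompact_uIcc.prod (isCompact_closedBall t 1)).exists_bound_of_continuousOn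
      (cGp.continuousOn)
    refine (intervalIntegral.hasDerivAt_integral_of_dominated_loc_of_deriv_le
      (F := fun τ x => g τ x) (F' := fun τ x => G τ x) (bound := fun _ => C)
      (Metric.ball_mem_nhds t one_pos) ?_ ?_ ?_ ?_ ?_ ?_).2
    · exact Filter.Eventually.of_forall fun τ =>
        ((cgp.comp (continuous_id.prodMk continuous_const)).aestronglyMeasurable)
    · exact (cgp.comp (continuous_id.prodMk continuous_const)).intervalIntegrable a b
    · exact (cGp.comp (continuous_id.prodMk continuous_const)).aestronglyMeasurable
    · refine Filter.Eventually.of_forall fun x hx τ hτ => ?_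
      exact hC (x, τ) ⟨Set.uIoc_subset_uIcc hx, Metric.ball_subset_closedBall hτ⟩
    · exact intervalIntegrable_const
    · exact Filter.Eventually.of_forall fun x _ τ _ => hgt x τ
  have hd : Differentiable ℝ (fun τ => ∫ x in a..b, g τ x) :=
    fun t => (hderiv t).differentiableAt
  have hz : ∀ t, deriv (fun τ => ∫ x in a..b, g τ x) t = 0 := by
    intro t; rw [(hderiv t).deriv, hIzero t]
  have hconst := is_const_of_deriv_eq_zero hd hz t₁ t₂
  have hInt : ∀ t, (∫ x in a..b,
      (-κ * ((deriv (fun y => u y t) x) * starRingEnd ℂ (deriv (u x) t)).re +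
        (1 / 2) * (u x t * starRingEnd ℂ (deriv (fun y => u y t) x)).im)) =
      ∫ x in a..b, g t x := by
    intro t
    apply intervalIntegral.integral_congr
    intro x _
    simp only [e1, e2, hg]
    rfl
  rw [hInt t₁, hInt t₂]
  exact hconst
end

section
/- Let z : ℝ × ℝ → ℝ⁶ be a smooth solution of K z_t + M z_x = ∇S(z), with K, M the skew-symmetric multi-symplectic matrices of the nonparaxial NLS and S(z) = V(p,q) + β(v²+w²)/2 + κ(φ²+ϕ²)/2. Then the local energy conservation law ∂_t 𝔈 + ∂_x 𝔉 = 0 holds, where 𝔈(z) = V(p,q) + κ(φ²+ϕ²)/2 + (β/2)(p v_x + q w_x) and 𝔉(z) = (β/2)(vφ + wϕ − p v_t − q w_t). -/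
noncomputable def Dt (f : ℝ → ℝ → ℝ) (x t : ℝ) : ℝ := deriv (fun s => f x s) t
noncomputable def Dx (f : ℝ → ℝ → ℝ) (x t : ℝ) : ℝ := deriv (fun y => f y t) x

namespace Stmt13Aux

variable {f : ℝ → ℝ → ℝ}

/-- the uncurried version -/
noncomputable def unc (f : ℝ → ℝ → ℝ) : ℝ × ℝ → ℝ := fun z => f z.1 z.2

lemma hasDerivAt_t (hf : ContDiff ℝ (⊤ : ℕ∞) (unc f)) (x t : ℝ) :
    HasDerivAt (fun s => f x s) (fderiv ℝ (unc f) (x, t) (0, 1)) t := by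
  have h1 : HasFDerivAt (unc f) (fderiv ℝ (unc f) (x, t)) (x, t) :=
    (hf.differentiable (by simp) (x, t)).hasFDerivAt
  have h2 : HasDerivAt (fun s : ℝ => ((x, s) : ℝ × ℝ)) (0, 1) t := by
    simpa using (hasDerivAt_const t x).prodMk (hasDerivAt_id t)
  exact h1.comp_hasDerivAt t h2

lemma hasDerivAt_x (hf : ContDiff ℝ (⊤ : ℕ∞) (unc f)) (x t : ℝ) :
    HasDerivAt (fun y => f y t) (fderiv ℝ (unc f) (x, t) (1, 0)) x := by
  have h1 : HasFDerivAt (unc f) (fderiv ℝ (unc f) (x, t)) (x, t) :=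
    (hf.differentiable (by simp) (x, t)).hasFDerivAt
  have h2 : HasDerivAt (fun y : ℝ => ((y, t) : ℝ × ℝ)) (1, 0) x := by
    simpa using (hasDerivAt_id x).prodMk (hasDerivAt_const x t)
  exact h1.comp_hasDerivAt x h2

lemma Dt_eq (hf : ContDiff ℝ (⊤ : ℕ∞) (unc f)) (x t : ℝ) :
    Dt f x t = fderiv ℝ (unc f) (x, t) (0, 1) :=
  (hasDerivAt_t hf x t).deriv

lemma Dx_eq (hf : ContDiff ℝ (⊤ : ℕ∞) (unc f)) (x t : ℝ) :
    Dx f x t = fderiv ℝ (unc f) (x, t) (1, 0) :=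
  (hasDerivAt_x hf x t).deriv

lemma hasDerivAt_Dt (hf : ContDiff ℝ (⊤ : ℕ∞) (unc f)) (x t : ℝ) :
    HasDerivAt (fun s => f x s) (Dt f x t) t := by
  rw [Dt_eq hf]; exact hasDerivAt_t hf x t

lemma hasDerivAt_Dx (hf : ContDiff ℝ (⊤ : ℕ∞) (unc f)) (x t : ℝ) :
    HasDerivAt (fun y => f y t) (Dx f x t) x := by
  rw [Dx_eq hf]; exact hasDerivAt_x hf x t

lemma smooth_fderiv_apply (hf : ContDiff ℝ (⊤ : ℕ∞) (unc f)) (a : ℝ × ℝ) :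
    ContDiff ℝ (⊤ : ℕ∞) (fun z => fderiv ℝ (unc f) z a) :=
  (hf.fderiv_right (by simp)).clm_apply contDiff_const

lemma unc_Dt (hf : ContDiff ℝ (⊤ : ℕ∞) (unc f)) :
    unc (Dt f) = fun z => fderiv ℝ (unc f) z (0, 1) := by
  funext z
  exact Dt_eq hf z.1 z.2

lemma unc_Dx (hf : ContDiff ℝ (⊤ : ℕ∞) (unc f)) :
    unc (Dx f) = fun z => fderiv ℝ (unc f) z (1, 0) := by
  funext z
  exact Dx_eq hf z.1 z.2

lemma smooth_Dt (hf : ContDiff ℝ (⊤ : ℕ∞) (unc f)) : ContDiff ℝ (⊤ : ℕ∞) (unc (Dt f)) := by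
  rw [unc_Dt hf]; exact smooth_fderiv_apply hf _

lemma smooth_Dx (hf : ContDiff ℝ (⊤ : ℕ∞) (unc f)) : ContDiff ℝ (⊤ : ℕ∞) (unc (Dx f)) := by
  rw [unc_Dx hf]; exact smooth_fderiv_apply hf _

lemma fderiv_fderiv_apply (hf : ContDiff ℝ (⊤ : ℕ∞) (unc f)) (z : ℝ × ℝ) (a b : ℝ × ℝ) :
    fderiv ℝ (fun y => fderiv ℝ (unc f) y a) z b
      = fderiv ℝ (fderiv ℝ (unc f)) z b a := by
  have hc : DifferentiableAt ℝ (fderiv ℝ (unc f)) z :=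
    (hf.fderiv_right (m := (⊤ : ℕ∞)) (by simp)).differentiable (by simp) z
  have := fderiv_clm_apply (c := fderiv ℝ (unc f)) (u := fun _ => a) hc
    (differentiableAt_const a)
  rw [this]
  simp

lemma Dt_Dx_comm (hf : ContDiff ℝ (⊤ : ℕ∞) (unc f)) (x t : ℝ) :
    Dt (Dx f) x t = Dx (Dt f) x t := by
  have hsymm : IsSymmSndFDerivAt ℝ (unc f) (x, t) :=
    hf.contDiffAt.isSymmSndFDerivAt ((by rw [minSmoothness_of_isRCLikeNormedField]; exact WithTop.coe_le_coe.mpr (le_top (a := (2 : ℕ∞)))))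
  rw [Dt_eq (smooth_Dx hf), Dx_eq (smooth_Dt hf), unc_Dx hf, unc_Dt hf,
    fderiv_fderiv_apply hf, fderiv_fderiv_apply hf]
  exact hsymm _ _

end Stmt13Aux

open Stmt13Aux in
/-- Local energy conservation law for the multi-symplectic nonparaxial NLS system. -/
theorem stmt13 (κ β : ℝ) (hκ : 0 < κ) (hβ : 0 < β)
    (V : ℝ × ℝ → ℝ) (hV : ContDiff ℝ (⊤ : ℕ∞) V)
    (p q v w φ ψ : ℝ → ℝ → ℝ)
    (hp : ContDiff ℝ (⊤ : ℕ∞) fun z : ℝ × ℝ => p z.1 z.2)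
    (hq : ContDiff ℝ (⊤ : ℕ∞) fun z : ℝ × ℝ => q z.1 z.2)
    (hv : ContDiff ℝ (⊤ : ℕ∞) fun z : ℝ × ℝ => v z.1 z.2)
    (hw : ContDiff ℝ (⊤ : ℕ∞) fun z : ℝ × ℝ => w z.1 z.2)
    (hφ : ContDiff ℝ (⊤ : ℕ∞) fun z : ℝ × ℝ => φ z.1 z.2)
    (hψ : ContDiff ℝ (⊤ : ℕ∞) fun z : ℝ × ℝ => ψ z.1 z.2)
    (heq1 : ∀ x t, -κ * Dt φ x t + Dt q x t - β * Dx v x t =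
      fderiv ℝ V (p x t, q x t) (1, 0))
    (heq2 : ∀ x t, -κ * Dt ψ x t - Dt p x t - β * Dx w x t =
      fderiv ℝ V (p x t, q x t) (0, 1))
    (heq3 : ∀ x t, β * Dx p x t = β * v x t)
    (heq4 : ∀ x t, β * Dx q x t = β * w x t)
    (heq5 : ∀ x t, κ * Dt p x t = κ * φ x t)
    (heq6 : ∀ x t, κ * Dt q x t = κ * ψ x t) :
    ∀ x t : ℝ,
      Dt (fun x t => V (p x t, q x t) + κ * ((φ x t) ^ 2 + (ψ x t) ^ 2) / 2 +
        (β / 2) * (p x t * Dx v x t + q x t * Dx w x t)) x t +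
      Dx (fun x t => (β / 2) * (v x t * φ x t + w x t * ψ x t -
        p x t * Dt v x t - q x t * Dt w x t)) x t = 0 := by
  intro x t
  have hκ' := hκ.ne'
  have hβ' := hβ.ne'
  -- pointwise simplifications of the first-order equations
  have e3 : ∀ y s, Dx p y s = v y s := fun y s => mul_left_cancel₀ hβ' (heq3 y s)
  have e4 : ∀ y s, Dx q y s = w y s := fun y s => mul_left_cancel₀ hβ' (heq4 y s)
  have e5 : ∀ y s, Dt p y s = φ y s := fun y s => mul_left_cancel₀ hκ' (heq5 y s)
  have e6 : ∀ y s, Dt q y s = ψ y s := fun y s => mul_left_cancel₀ hκ' (heq6 y s)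
  -- cross derivatives: Dx φ = Dt v, Dx ψ = Dt w
  have exφ : Dx φ x t = Dt v x t := by
    have h1 : Dx φ x t = Dx (Dt p) x t := by
      unfold Dx
      congr 1
      funext y
      exact (e5 y t).symm
    have h2 : Dt (Dx p) x t = Dt v x t := by
      unfold Dt
      congr 1
      funext s
      exact e3 x s
    rw [h1, ← Dt_Dx_comm hp x t, h2]
  have exψ : Dx ψ x t = Dt w x t := by
    have h1 : Dx ψ x t = Dx (Dt q) x t := by
      unfold Dx
      congr 1
      funext y
      exact (e6 y t).symm
    have h2 : Dt (Dx q) x t = Dt w x t := by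
      unfold Dt
      congr 1
      funext s
      exact e4 x s
    rw [h1, ← Dt_Dx_comm hq x t, h2]
  -- time derivative of the energy density
  have hVcurve : HasDerivAt (fun s => V (p x s, q x s))
      (fderiv ℝ V (p x t, q x t) (Dt p x t, Dt q x t)) t := by
    have hc : HasDerivAt (fun s => ((p x s, q x s) : ℝ × ℝ))
        (Dt p x t, Dt q x t) t := (hasDerivAt_Dt hp x t).prodMk (hasDerivAt_Dt hq x t)
    exact ((hV.differentiable (by simp) _).hasFDerivAt).comp_hasDerivAt t hc
  have hE : HasDerivAt (fun s => V (p x s, q x s) + κ * ((φ x s) ^ 2 + (ψ x s) ^ 2) / 2 +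
      (β / 2) * (p x s * Dx v x s + q x s * Dx w x s))
      (fderiv ℝ V (p x t, q x t) (Dt p x t, Dt q x t)
        + κ * (((2:ℕ):ℝ) * φ x t ^ (2-1) * Dt φ x t + ((2:ℕ):ℝ) * ψ x t ^ (2-1) * Dt ψ x t) / 2
        + (β / 2) * (Dt p x t * Dx v x t + p x t * Dt (Dx v) x t
            + (Dt q x t * Dx w x t + q x t * Dt (Dx w) x t))) t := by
    exact (hVcurve.add
      ((((((hasDerivAt_Dt hφ x t).pow 2).add ((hasDerivAt_Dt hψ x t).pow 2)).const_mul κ).div_const 2))).add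
      ((((hasDerivAt_Dt hp x t).mul (hasDerivAt_Dt (smooth_Dx hv) x t)).add
        ((hasDerivAt_Dt hq x t).mul (hasDerivAt_Dt (smooth_Dx hw) x t))).const_mul (β / 2))
  -- spatial derivative of the flux density
  have hF : HasDerivAt (fun y => (β / 2) * (v y t * φ y t + w y t * ψ y t -
      p y t * Dt v y t - q y t * Dt w y t))
      ((β / 2) * (Dx v x t * φ x t + v x t * Dx φ x t
        + (Dx w x t * ψ x t + w x t * Dx ψ x t)
        - (Dx p x t * Dt v x t + p x t * Dx (Dt v) x t)
        - (Dx q x t * Dt w x t + q x t * Dx (Dt w) x t))) x := by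
    exact (((((hasDerivAt_Dx hv x t).mul (hasDerivAt_Dx hφ x t)).add
      ((hasDerivAt_Dx hw x t).mul (hasDerivAt_Dx hψ x t))).sub
      ((hasDerivAt_Dx hp x t).mul (hasDerivAt_Dx (smooth_Dt hv) x t))).sub
      ((hasDerivAt_Dx hq x t).mul (hasDerivAt_Dx (smooth_Dt hw) x t))).const_mul (β / 2)
  rw [show Dt (fun x t => V (p x t, q x t) + κ * ((φ x t) ^ 2 + (ψ x t) ^ 2) / 2 +
        (β / 2) * (p x t * Dx v x t + q x t * Dx w x t)) x t = _ from hE.deriv,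
      show Dx (fun x t => (β / 2) * (v x t * φ x t + w x t * ψ x t -
        p x t * Dt v x t - q x t * Dt w x t)) x t = _ from hF.deriv]
  -- linearity of fderiv V
  have hVlin : fderiv ℝ V (p x t, q x t) (Dt p x t, Dt q x t)
      = Dt p x t * fderiv ℝ V (p x t, q x t) (1, 0)
        + Dt q x t * fderiv ℝ V (p x t, q x t) (0, 1) := by
    have : ((Dt p x t, Dt q x t) : ℝ × ℝ)
        = Dt p x t • ((1, 0) : ℝ × ℝ) + Dt q x t • ((0, 1) : ℝ × ℝ) := by
      simp [Prod.ext_iff]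
    rw [this, map_add, map_smul, map_smul]
    simp [smul_eq_mul]
  rw [hVlin, ← heq1 x t, ← heq2 x t, e5, e6, e3, e4, exφ, exψ,
    Dt_Dx_comm hv x t, Dt_Dx_comm hw x t]
  ring
end

section
/- Let U, V : ℝ → ℝ^{6N} be solutions of the semi-discrete variational equation (I_N ⊗ K)·(d/dt)Z + (B_h ⊗ M)Z = S''(z_h)Z, where B_h is a skew-symmetric N×N real matrix and K, M are skew-symmetric 6×6 matrices. Then the total discrete symplecticity Σ_{j=0}^{N−1} ⟨K U_j, V_j⟩ is constant in time. -/
open Matrix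

private lemma stmt15_trans_dot {n : Type*} [Fintype n]
    (A : Matrix n n ℝ) (u v : n → ℝ) :
    A.mulVec u ⬝ᵥ v = u ⬝ᵥ Aᵀ.mulVec v := by
  rw [dotProduct_comm, Matrix.dotProduct_mulVec, ← Matrix.mulVec_transpose,
    dotProduct_comm]

private lemma stmt15_sum_dot {n m : Type*} [Fintype n] [Fintype m]
    (w : m → n → ℝ) (v : n → ℝ) :
    (∑ l, w l) ⬝ᵥ v = ∑ l, w l ⬝ᵥ v := by
  simp only [dotProduct, Finset.sum_apply, Finset.sum_mul]
  rw [Finset.sum_comm]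

private lemma stmt15_dot_sum {n m : Type*} [Fintype n] [Fintype m]
    (v : n → ℝ) (w : m → n → ℝ) :
    v ⬝ᵥ (∑ l, w l) = ∑ l, v ⬝ᵥ w l := by
  simp only [dotProduct, Finset.sum_apply, Finset.mul_sum]
  rw [Finset.sum_comm]

private lemma stmt15_mulVec_sum {n m : Type*} [Fintype n] [Fintype m]
    (A : Matrix n n ℝ) (c : m → ℝ) (u : m → n → ℝ) :
    A.mulVec (∑ l, c l • u l) = ∑ l, c l • A.mulVec (u l) := by
  rw [show A.mulVec = Matrix.mulVecLin A from rfl, map_sum]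
  simp

/-- Conservation of total discrete symplecticity for the spatial semi-discretization. -/
theorem stmt15 (N : ℕ) (hN : 1 ≤ N)
    (K M : Matrix (Fin 6) (Fin 6) ℝ) (hK : Kᵀ = -K) (hM : Mᵀ = -M)
    (B : Matrix (Fin N) (Fin N) ℝ) (hB : Bᵀ = -B)
    (S'' : ℝ → Fin N → Matrix (Fin 6) (Fin 6) ℝ)
    (hS : ∀ t j, (S'' t j)ᵀ = S'' t j)
    (U V : ℝ → Fin N → Fin 6 → ℝ)
    (hUd : ∀ j : Fin N, Differentiable ℝ fun t => U t j)
    (hVd : ∀ j : Fin N, Differentiable ℝ fun t => V t j)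
    (hU : ∀ (t : ℝ) (j : Fin N),
      K.mulVec (deriv (fun s => U s j) t) + M.mulVec (∑ l, B j l • U t l) =
        (S'' t j).mulVec (U t j))
    (hV : ∀ (t : ℝ) (j : Fin N),
      K.mulVec (deriv (fun s => V s j) t) + M.mulVec (∑ l, B j l • V t l) =
        (S'' t j).mulVec (V t j)) :
    ∀ t₁ t₂ : ℝ,
      (∑ j, K.mulVec (U t₁ j) ⬝ᵥ V t₁ j) = ∑ j, K.mulVec (U t₂ j) ⬝ᵥ V t₂ j := by
  -- skew/symmetric dot-product facts
  have hKd : ∀ u v : Fin 6 → ℝ, K.mulVec u ⬝ᵥ v = -(u ⬝ᵥ K.mulVec v) := by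
    intro u v
    rw [stmt15_trans_dot, hK, Matrix.neg_mulVec, dotProduct_neg]
  have hMd : ∀ u v : Fin 6 → ℝ, M.mulVec u ⬝ᵥ v = -(u ⬝ᵥ M.mulVec v) := by
    intro u v
    rw [stmt15_trans_dot, hM, Matrix.neg_mulVec, dotProduct_neg]
  have hSd : ∀ t j (u v : Fin 6 → ℝ),
      (S'' t j).mulVec u ⬝ᵥ v = u ⬝ᵥ (S'' t j).mulVec v := by
    intro t j u v
    rw [stmt15_trans_dot, hS]
  have hB' : ∀ j l, B l j = -B j l := by
    intro j l
    have := congrFun (congrFun hB j) l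
    simpa [Matrix.transpose_apply] using this
  set F : ℝ → ℝ := fun t => ∑ j, K.mulVec (U t j) ⬝ᵥ V t j with hFdef
  have hder : ∀ t, HasDerivAt F 0 t := by
    intro t
    set U' : Fin N → Fin 6 → ℝ := fun j => deriv (fun s => U s j) t with hU'def
    set V' : Fin N → Fin 6 → ℝ := fun j => deriv (fun s => V s j) t with hV'def
    have hUj : ∀ j i, HasDerivAt (fun s => U s j i) (U' j i) t := fun j i =>
      (hasDerivAt_pi.mp ((hUd j t).hasDerivAt)) i
    have hVj : ∀ j i, HasDerivAt (fun s => V s j i) (V' j i) t := fun j i =>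
      (hasDerivAt_pi.mp ((hVd j t).hasDerivAt)) i
    have h1 : HasDerivAt (fun s => ∑ j, ∑ i, (∑ k, K i k * U s j k) * V s j i)
        (∑ j, ∑ i, ((∑ k, K i k * U' j k) * V t j i + (∑ k, K i k * U t j k) * V' j i)) t := by
      refine HasDerivAt.fun_sum fun j _ => HasDerivAt.fun_sum fun i _ => ?_
      exact (HasDerivAt.fun_sum fun k _ => (hUj j k).const_mul (K i k)).mul (hVj j i)
    have hFeq : F = fun s => ∑ j, ∑ i, (∑ k, K i k * U s j k) * V s j i := by
      funext s
      simp [hFdef, dotProduct, Matrix.mulVec]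
    have hval : (∑ j, ∑ i, ((∑ k, K i k * U' j k) * V t j i + (∑ k, K i k * U t j k) * V' j i))
        = ∑ j, (K.mulVec (U' j) ⬝ᵥ V t j + K.mulVec (U t j) ⬝ᵥ V' j) := by
      simp [dotProduct, Matrix.mulVec, Finset.sum_add_distrib]
    have hzero : (∑ j, (K.mulVec (U' j) ⬝ᵥ V t j + K.mulVec (U t j) ⬝ᵥ V' j)) = 0 := by
      have eU : ∀ j, K.mulVec (U' j)
          = (S'' t j).mulVec (U t j) - M.mulVec (∑ l, B j l • U t l) :=
        fun j => eq_sub_of_add_eq (hU t j)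
      have eV : ∀ j, K.mulVec (V' j)
          = (S'' t j).mulVec (V t j) - M.mulVec (∑ l, B j l • V t l) :=
        fun j => eq_sub_of_add_eq (hV t j)
      have step : ∀ j, K.mulVec (U' j) ⬝ᵥ V t j + K.mulVec (U t j) ⬝ᵥ V' j
          = ∑ l, (-(B j l * (M.mulVec (U t l) ⬝ᵥ V t j))
              + -(B j l * (M.mulVec (U t j) ⬝ᵥ V t l))) := by
        intro j
        have h2 : K.mulVec (U t j) ⬝ᵥ V' j = -(U t j ⬝ᵥ K.mulVec (V' j)) := hKd _ _
        rw [h2, eU j, eV j, sub_dotProduct, dotProduct_sub, hSd t j]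
        rw [stmt15_mulVec_sum, stmt15_mulVec_sum, stmt15_sum_dot, stmt15_dot_sum]
        have e3 : ∀ l, U t j ⬝ᵥ B j l • M.mulVec (V t l)
            = -(B j l * (M.mulVec (U t j) ⬝ᵥ V t l)) := by
          intro l
          rw [dotProduct_smul, smul_eq_mul]
          have h5 : U t j ⬝ᵥ M.mulVec (V t l) = -(M.mulVec (U t j) ⬝ᵥ V t l) := by
            rw [hMd]
            exact (neg_neg _).symm
          rw [h5]
          ring
        have e4 : ∀ l, (B j l • M.mulVec (U t l)) ⬝ᵥ V t j
            = B j l * (M.mulVec (U t l) ⬝ᵥ V t j) := by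
          intro l
          rw [smul_dotProduct, smul_eq_mul]
        simp only [e3, e4]
        rw [Finset.sum_add_distrib, Finset.sum_neg_distrib, Finset.sum_neg_distrib]
        ring
      rw [Finset.sum_congr rfl fun j _ => step j]
      set f : Fin N → Fin N → ℝ := fun j l =>
        -(B j l * (M.mulVec (U t l) ⬝ᵥ V t j))
          + -(B j l * (M.mulVec (U t j) ⬝ᵥ V t l)) with hfdef
      have hf : ∀ j l, f j l = -f l j := by
        intro j l
        simp only [hfdef, hB' l j]
        ring
      have hswap : (∑ j, ∑ l, f j l) = -(∑ j, ∑ l, f j l) := by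
        calc (∑ j, ∑ l, f j l) = ∑ l, ∑ j, f j l := Finset.sum_comm
          _ = ∑ l, ∑ j, -f l j := by
              exact Finset.sum_congr rfl fun l _ => Finset.sum_congr rfl fun j _ => hf j l
          _ = -(∑ j, ∑ l, f j l) := by
              simp
      linarith
    rw [hFeq, ← hzero, ← hval]
    exact h1
  intro t₁ t₂
  exact is_const_of_deriv_eq_zero (fun x => (hder x).differentiableAt)
    (fun x => (hder x).deriv) t₁ t₂
end
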